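/- Let T, S be positive definite M×M and L×L Hermitian matrices and z > 0. Define f(ḡ) = (1/M)Tr T(I + g(ḡ)T)⁻¹ with g(ḡ) = (1/M)Tr S(zI + ḡS)⁻¹ for ḡ > 0. Then f is monotonically increasing in ḡ and ḡ ↦ f(ḡ)/ḡ is monotonically decreasing. -/
import Mathlib

open Matrix

lemma trace_aux {n : ℕ} {A : Matrix (Fin n) (Fin n) ℝ} (hA : A.PosDef)
    (a b : ℝ) (ha : 0 < a) (hb : 0 ≤ b) :
    (A * (a • (1 : Matrix (Fin n) (Fin n) ℝ) + b • A)⁻¹).trace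
      = ∑ i, hA.1.eigenvalues i / (a + b * hA.1.eigenvalues i) := by
  set U : Matrix (Fin n) (Fin n) ℝ := (hA.1.eigenvectorUnitary : Matrix (Fin n) (Fin n) ℝ) with hU
  set d : Fin n → ℝ := hA.1.eigenvalues with hd
  have hdpos : ∀ i, 0 < d i := fun i => hA.eigenvalues_pos i
  have hden : ∀ i, 0 < a + b * d i := fun i =>
    add_pos_of_pos_of_nonneg ha (mul_nonneg hb (hdpos i).le)
  have hUU : U * star U = 1 := (Matrix.mem_unitaryGroup_iff).mp hA.1.eigenvectorUnitary.2
  have hUU' : star U * U = 1 := (Matrix.mem_unitaryGroup_iff').mp hA.1.eigenvectorUnitary.2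
  have hAeq : A = U * diagonal d * star U := by
    have := hA.1.spectral_theorem
    simpa using this
  have hBeq : a • (1 : Matrix (Fin n) (Fin n) ℝ) + b • A
      = U * diagonal (fun i => a + b * d i) * star U := by
    have : diagonal (fun i => a + b * d i)
        = a • (1 : Matrix (Fin n) (Fin n) ℝ) + b • diagonal d := by
      rw [← diagonal_one, ← diagonal_smul, ← diagonal_smul, diagonal_add]
      funext i; simp
    rw [this, Matrix.mul_add, Matrix.add_mul, Matrix.mul_smul, Matrix.smul_mul,
      Matrix.mul_smul, Matrix.smul_mul, Matrix.mul_one, hUU, hAeq]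
  have hinv : (a • (1 : Matrix (Fin n) (Fin n) ℝ) + b • A)⁻¹
      = U * diagonal (fun i => (a + b * d i)⁻¹) * star U := by
    rw [hBeq]
    apply Matrix.inv_eq_right_inv
    calc U * diagonal (fun i => a + b * d i) * star U *
          (U * diagonal (fun i => (a + b * d i)⁻¹) * star U)
        = U * (diagonal (fun i => a + b * d i) * (star U * U)
            * diagonal (fun i => (a + b * d i)⁻¹)) * star U := by
          simp only [Matrix.mul_assoc]
      _ = 1 := by
          rw [hUU', Matrix.mul_one, diagonal_mul_diagonal]
          have : (fun i => (a + b * d i) * (a + b * d i)⁻¹) = fun _ => (1:ℝ) := by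
            funext i; exact mul_inv_cancel₀ (hden i).ne'
          rw [this, diagonal_one, Matrix.mul_one, hUU]
  rw [hinv, hAeq]
  have : U * diagonal d * star U * (U * diagonal (fun i => (a + b * d i)⁻¹) * star U)
      = U * diagonal (fun i => d i * (a + b * d i)⁻¹) * star U := by
    calc U * diagonal d * star U * (U * diagonal (fun i => (a + b * d i)⁻¹) * star U)
        = U * (diagonal d * (star U * U) * diagonal (fun i => (a + b * d i)⁻¹)) * star U := by
          simp only [Matrix.mul_assoc]
      _ = _ := by rw [hUU', Matrix.mul_one, diagonal_mul_diagonal]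
  rw [this, Matrix.trace_mul_cycle, hUU', Matrix.one_mul, trace_diagonal]
  simp [div_eq_mul_inv]

/-- Monotonicity of the canonical fixed-point map: with T, S positive definite and z > 0,
f(ḡ) = (1/M)Tr T(I + g(ḡ)T)⁻¹, g(ḡ) = (1/M)Tr S(zI + ḡS)⁻¹, the map f is
monotonically increasing on (0,∞) and ḡ ↦ f(ḡ)/ḡ is monotonically decreasing. -/
theorem stmt_12 (M L : ℕ) (hM : 0 < M) (hL : 0 < L) (z : ℝ) (hz : 0 < z)
    (T : Matrix (Fin M) (Fin M) ℝ) (S : Matrix (Fin L) (Fin L) ℝ)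
    (hT : T.PosDef) (hS : S.PosDef) :
    StrictMonoOn
      (fun gbar : ℝ => (1 / (M : ℝ)) *
        (T * (1 + ((1 / (M : ℝ)) *
          (S * (z • (1 : Matrix (Fin L) (Fin L) ℝ) + gbar • S)⁻¹).trace) • T)⁻¹).trace)
      (Set.Ioi 0) ∧
    StrictAntiOn
      (fun gbar : ℝ => ((1 / (M : ℝ)) *
        (T * (1 + ((1 / (M : ℝ)) *
          (S * (z • (1 : Matrix (Fin L) (Fin L) ℝ) + gbar • S)⁻¹).trace) • T)⁻¹).trace)
        / gbar)
      (Set.Ioi 0) := by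
  have hMpos : (0:ℝ) < 1 / (M:ℝ) := by positivity
  set μ : Fin L → ℝ := hS.1.eigenvalues with hμ
  set lam : Fin M → ℝ := hT.1.eigenvalues with hlam
  have hμpos : ∀ j, 0 < μ j := fun j => hS.eigenvalues_pos j
  have hlampos : ∀ i, 0 < lam i := fun i => hT.eigenvalues_pos i
  have hMne : Nonempty (Fin M) := Fin.pos_iff_nonempty.mp hM
  have hLne : Nonempty (Fin L) := Fin.pos_iff_nonempty.mp hL
  set G : ℝ → ℝ := fun x => (1 / (M:ℝ)) * ∑ j, μ j / (z + x * μ j) with hG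
  have hGtr : ∀ x : ℝ, 0 ≤ x →
      (1 / (M : ℝ)) * (S * (z • (1 : Matrix (Fin L) (Fin L) ℝ) + x • S)⁻¹).trace = G x := by
    intro x hx
    rw [trace_aux hS z x hz hx]
  have hGpos : ∀ x : ℝ, 0 ≤ x → 0 < G x := by
    intro x hx
    apply mul_pos hMpos
    apply Finset.sum_pos _ Finset.univ_nonempty
    intro j _
    exact div_pos (hμpos j) (add_pos_of_pos_of_nonneg hz (mul_nonneg hx (hμpos j).le))
  have hGanti : ∀ x y : ℝ, 0 ≤ x → x < y → G y < G x := by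
    intro x y hx hxy
    apply mul_lt_mul_of_pos_left _ hMpos
    apply Finset.sum_lt_sum_of_nonempty Finset.univ_nonempty
    intro j _
    apply div_lt_div_of_pos_left (hμpos j)
      (add_pos_of_pos_of_nonneg hz (mul_nonneg hx (hμpos j).le))
    have := mul_lt_mul_of_pos_right hxy (hμpos j)
    linarith
  set H : ℝ → ℝ := fun x => x * G x with hH
  have hHmono : ∀ x y : ℝ, 0 < x → x < y → H x < H y := by
    intro x y hx hxy
    have hy : 0 < y := hx.trans hxy
    have expand : ∀ w : ℝ, H w = (1 / (M:ℝ)) * ∑ j, w * μ j / (z + w * μ j) := by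
      intro w
      have h1 : H w = (1 / (M:ℝ)) * (w * ∑ j, μ j / (z + w * μ j)) := by
        simp only [hH, hG]; ring
      rw [h1, Finset.mul_sum]
      simp only [mul_div_assoc']
    rw [expand x, expand y]
    apply mul_lt_mul_of_pos_left _ hMpos
    apply Finset.sum_lt_sum_of_nonempty Finset.univ_nonempty
    intro j _
    rw [div_lt_div_iff₀ (add_pos_of_pos_of_nonneg hz (mul_nonneg hx.le (hμpos j).le))
        (add_pos_of_pos_of_nonneg hz (mul_nonneg hy.le (hμpos j).le))]
    have h1 := mul_lt_mul_of_pos_right hxy (mul_pos (hμpos j) hz)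
    nlinarith [hμpos j]
  set F : ℝ → ℝ := fun x => (1 / (M:ℝ)) * ∑ i, lam i / (1 + G x * lam i) with hF
  have hFtr : ∀ x : ℝ, 0 < x →
      (1 / (M : ℝ)) * (T * (1 + G x • T)⁻¹).trace = F x := by
    intro x hx
    rw [show (1 : Matrix (Fin M) (Fin M) ℝ) = (1:ℝ) • 1 from (one_smul ℝ _).symm,
      trace_aux hT 1 (G x) one_pos (hGpos x hx.le).le]
  have hdenpos : ∀ (x : ℝ), 0 ≤ x → ∀ i, 0 < 1 + G x * lam i := by
    intro x hx i
    exact add_pos one_pos (mul_pos (hGpos x hx) (hlampos i))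
  constructor
  · intro x hx y hy hxy
    simp only [Set.mem_Ioi] at hx hy
    simp only
    rw [hGtr x hx.le, hGtr y hy.le, hFtr x hx, hFtr y hy]
    apply mul_lt_mul_of_pos_left _ hMpos
    apply Finset.sum_lt_sum_of_nonempty Finset.univ_nonempty
    intro i _
    apply div_lt_div_of_pos_left (hlampos i) (hdenpos y hy.le i)
    have := mul_lt_mul_of_pos_right (hGanti x y hx.le hxy) (hlampos i)
    linarith
  · intro x hx y hy hxy
    simp only [Set.mem_Ioi] at hx hy
    have hy0 : 0 < y := hy
    simp only
    rw [hGtr x hx.le, hGtr y hy.le, hFtr x hx, hFtr y hy]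
    have key : ∀ w : ℝ, 0 < w → F w / w = (1 / (M:ℝ)) * ∑ i, lam i / (w + H w * lam i) := by
      intro w hw
      simp only [hF]
      rw [mul_div_assoc, Finset.sum_div]
      congr 1
      apply Finset.sum_congr rfl
      intro i _
      rw [div_div]
      congr 1
      simp only [hH]; ring
    rw [key x hx, key y hy0]
    apply mul_lt_mul_of_pos_left _ hMpos
    apply Finset.sum_lt_sum_of_nonempty Finset.univ_nonempty
    intro i _
    have hHx : 0 < H x := mul_pos hx (hGpos x hx.le)
    apply div_lt_div_of_pos_left (hlampos i)
      (add_pos hx (mul_pos hHx (hlampos i)))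
    have := mul_lt_mul_of_pos_right (hHmono x y hx hxy) (hlampos i)
    linarith
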